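/- Let S be simple random walk on ℤ and, for k ∈ ℤ with k ≠ 0, let H_k be the first hitting time of k. Then for every m ∈ ℕ with m ≥ 1: if m and k have the same parity then P(H_k = m) = (|k|/m)·binom(m, (m+|k|)/2)·2^{−m}, and if m and k have different parity then P(H_k = m) = 0. -/

import Mathlib

/-!
A path of `n` steps `±1` that first reaches `k ≠ 0` at time `n` starts with a step `a = ±1` and
continues with a path that first reaches `k - a` at time `n - 1`. Hence the number `f n k` of such
paths satisfies `f (n + 1) k = f n (k - 1) + f n (k + 1)`, and by induction, with Pascal's rule,
`f (n + 1) k = C(n, p) - C(n, p + 1)` when `n + 1 + k = 2 (p + 1)`, which equals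
`k / (n + 1) · C(n + 1, p + 1)`. On the probability side, almost surely every step is `±1`, and by
independence each of the `2 ^ n` step patterns has probability `2⁻¹ ^ n`.
-/

open MeasureTheory Finset
open scoped ProbabilityTheory

theorem Nat.sInf_setOf_eq_iff {p : ℕ → Prop} {m : ℕ} (hm : m ≠ 0) :
    sInf {n | p n} = m ↔ p m ∧ ∀ j < m, ¬ p j := by
  classical
  by_cases hne : ∃ n, p n
  · rw [Nat.sInf_def (s := {n | p n}) hne]
    exact Nat.find_eq_iff hne
  · push Not at hne
    simp [hne, hm.symm]

namespace SimpleRandomWalk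

def signLists : ℕ → Finset (List ℤ)
  | 0 => {[]}
  | n + 1 => (signLists n).map ⟨List.cons 1, List.cons_injective⟩ ∪
      (signLists n).map ⟨List.cons (-1), List.cons_injective⟩

theorem mem_signLists {n : ℕ} {l : List ℤ} :
    l ∈ signLists n ↔ l.length = n ∧ ∀ x ∈ l, x = 1 ∨ x = -1 := by
  induction n generalizing l with
  | zero => cases l <;> simp [signLists]
  | succ n ih =>
    cases l with
    | nil => simp [signLists]
    | cons a t => simp only [signLists, mem_union, mem_map, ih]; aesop

/-- Time `0` counts, so for `k = 0` only the empty path qualifies; this is what makes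
`isFirstPassage_cons` hold without side conditions. -/
def IsFirstPassage (k : ℤ) (l : List ℤ) : Prop :=
  l.sum = k ∧ ∀ j < l.length, (l.take j).sum ≠ k

instance (k : ℤ) : DecidablePred (IsFirstPassage k) :=
  fun _ => inferInstanceAs (Decidable (_ ∧ _))

theorem isFirstPassage_nil {k : ℤ} : IsFirstPassage k [] ↔ k = 0 := by
  simp [IsFirstPassage, eq_comm]

theorem isFirstPassage_cons {k a : ℤ} {l : List ℤ} :
    IsFirstPassage k (a :: l) ↔ k ≠ 0 ∧ IsFirstPassage (k - a) l := by
  simp only [IsFirstPassage, List.sum_cons, List.length_cons, Nat.forall_lt_succ_left,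
    List.take_zero, List.sum_nil, List.take_succ_cons]
  constructor
  · rintro ⟨hs, h0, hj⟩
    exact ⟨Ne.symm h0, by omega, fun j hj' => by have := hj j hj'; omega⟩
  · rintro ⟨h0, hs, hj⟩
    exact ⟨by omega, Ne.symm h0, fun j hj' => by have := hj j hj'; omega⟩

def firstPassageCount (n : ℕ) (k : ℤ) : ℕ :=
  #{l ∈ signLists n | IsFirstPassage k l}

theorem firstPassageCount_zero (k : ℤ) : firstPassageCount 0 k = if k = 0 then 1 else 0 := by
  by_cases hk : k = 0 <;>
    simp [firstPassageCount, signLists, filter_singleton, isFirstPassage_nil, hk]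

theorem card_filter_isFirstPassage_cons (n : ℕ) (k a : ℤ) :
    #{l ∈ signLists n | IsFirstPassage k (a :: l)} =
      if k = 0 then 0 else firstPassageCount n (k - a) := by
  split_ifs with hk <;> simp [firstPassageCount, isFirstPassage_cons, hk]

theorem firstPassageCount_succ (n : ℕ) (k : ℤ) :
    firstPassageCount (n + 1) k =
      if k = 0 then 0 else firstPassageCount n (k - 1) + firstPassageCount n (k + 1) := by
  have hdisj : Disjoint ((signLists n).map ⟨List.cons 1, List.cons_injective⟩)
      ((signLists n).map ⟨List.cons (-1), List.cons_injective⟩) := by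
    simp [disjoint_left]
  rw [firstPassageCount, signLists, filter_union,
    card_union_of_disjoint (disjoint_filter_filter hdisj), filter_map, card_map, filter_map,
    card_map]
  have := card_filter_isFirstPassage_cons n k 1
  have := card_filter_isFirstPassage_cons n k (-1)
  split_ifs at * <;> simp_all

theorem firstPassageCount_neg (n : ℕ) (k : ℤ) :
    firstPassageCount n (-k) = firstPassageCount n k := by
  induction n generalizing k with
  | zero => simp [firstPassageCount_zero]
  | succ n ih =>
    rw [firstPassageCount_succ, firstPassageCount_succ, ← ih (k + 1), ← ih (k - 1)]
    simp only [neg_eq_zero, neg_add, neg_sub', add_comm]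
    ring_nf

theorem firstPassageCount_abs (n : ℕ) (k : ℤ) :
    firstPassageCount n |k| = firstPassageCount n k := by
  rcases abs_choice k with h | h <;> rw [h]
  exact firstPassageCount_neg n k

theorem firstPassageCount_eq_zero_of_mod_two_ne {n k : ℕ} (h : n % 2 ≠ k % 2) :
    firstPassageCount n k = 0 := by
  induction n generalizing k with
  | zero => simp [firstPassageCount_zero]; omega
  | succ n ih =>
    rw [firstPassageCount_succ]
    rcases k with _ | k
    · simp
    · push_cast
      rw [if_neg (by omega), add_sub_cancel_right,
        show (k : ℤ) + 1 + 1 = ((k + 2 : ℕ) : ℤ) by push_cast; ring,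
        ih (by omega), ih (by omega)]

theorem firstPassageCount_add_choose (n k p : ℕ) (h : n + 1 + k = 2 * (p + 1)) :
    firstPassageCount (n + 1) k + (n.choose (p + 1)) = n.choose p := by
  induction n generalizing k p with
  | zero =>
    rw [firstPassageCount_succ, firstPassageCount_zero, firstPassageCount_zero]
    rcases p with _ | p
    · obtain rfl : k = 1 := by omega
      simp
    · simp [show (k : ℤ) - 1 ≠ 0 by omega, show (k : ℤ) + 1 ≠ 0 by omega]
  | succ n ih =>
    rw [firstPassageCount_succ]
    rcases k with _ | k
    · obtain rfl : n = 2 * p := by omega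
      simp [Nat.choose_symm_half]
    · obtain ⟨q, rfl⟩ : ∃ q, p = q + 1 := ⟨p - 1, by omega⟩
      have ih₁ := ih k q (by omega)
      have ih₂ := ih (k + 2) (q + 1) (by omega)
      push_cast at ih₂ ⊢
      rw [if_neg (by omega), add_sub_cancel_right, show (k : ℤ) + 1 + 1 = k + 2 by ring,
        Nat.choose_succ_succ' n (q + 1), Nat.choose_succ_succ' n q]
      omega

theorem mul_firstPassageCount (n k : ℕ) (h : n % 2 = k % 2) :
    n * firstPassageCount n k = k * n.choose ((n + k) / 2) := by
  rcases n with _ | n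
  · rcases k with _ | k
    · simp
    · rw [Nat.choose_eq_zero_of_lt (by omega)]; simp
  obtain ⟨p, hp⟩ : ∃ p, n + 1 + k = 2 * (p + 1) := ⟨(n + k) / 2, by omega⟩
  have hcount := firstPassageCount_add_choose n k p hp
  have h₁ := Nat.add_one_mul_choose_eq n p
  have h₂ := Nat.choose_mul_succ_eq n (p + 1)
  rw [show (n + 1 + k) / 2 = p + 1 by omega]
  rcases Nat.lt_or_ge n p with hnp | hpn
  · rw [Nat.choose_eq_zero_of_lt (by omega : n < p)] at hcount
    rw [Nat.choose_eq_zero_of_lt (by omega : n + 1 < p + 1)]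
    simp_all
  · rw [Nat.add_sub_add_right] at h₂
    zify [hpn] at h₁ h₂ hcount ⊢
    have hk : (k : ℤ) = 2 * p + 1 - n := by omega
    linear_combination (n + 1 : ℤ) * hcount + h₁ - h₂ - ((n + 1).choose (p + 1) : ℤ) * hk

section Walk

variable {Ω : Type*} {ζ : ℕ → Ω → ℤ}

def stepList (ζ : ℕ → Ω → ℤ) (n : ℕ) (ω : Ω) : List ℤ :=
  List.ofFn fun i : Fin n => ζ i ω

@[simp]
theorem length_stepList (n : ℕ) (ω : Ω) : (stepList ζ n ω).length = n := by
  simp [stepList]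

theorem sum_take_stepList {n j : ℕ} (hj : j ≤ n) (ω : Ω) :
    ((stepList ζ n ω).take j).sum = ∑ i ∈ range j, ζ i ω := by
  rw [stepList, ← Fin.ofFn_take_eq_take_ofFn hj, List.sum_ofFn]
  exact Fin.sum_univ_eq_sum_range (ζ · ω) j

theorem stepList_eq_iff {n : ℕ} {l : List ℤ} (hl : l.length = n) (ω : Ω) :
    stepList ζ n ω = l ↔ ∀ i ∈ range n, ζ i ω = l.getD i 0 := by
  subst hl
  simp +contextual [List.ext_getElem_iff, stepList]

theorem hittingTime_eq_iff {k : ℤ} (hk : k ≠ 0) {n : ℕ} (hn : n ≠ 0) (ω : Ω) :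
    sInf {j | 1 ≤ j ∧ ∑ i ∈ range j, ζ i ω = k} = n ↔
      IsFirstPassage k (stepList ζ n ω) := by
  have hsum {j : ℕ} (hj : j ≤ n) := sum_take_stepList (ζ := ζ) hj ω
  have hsum_n : (stepList ζ n ω).sum = ∑ i ∈ range n, ζ i ω := by
    simpa [List.take_of_length_le] using hsum le_rfl
  rw [Nat.sInf_setOf_eq_iff hn, IsFirstPassage, length_stepList, hsum_n]
  refine and_congr (by simp [Nat.one_le_iff_ne_zero.2 hn]) (forall₂_congr fun j hj => ?_)
  rw [hsum hj.le]
  rcases j with _ | j <;> simp [Ne.symm hk]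

variable [MeasurableSpace Ω] {μ : Measure Ω}

theorem ae_eq_one_or_eq_neg_one [IsProbabilityMeasure μ] {X : Ω → ℤ} (hX : Measurable X)
    (h₁ : μ {ω | X ω = 1} = 1 / 2) (h₂ : μ {ω | X ω = -1} = 1 / 2) :
    ∀ᵐ ω ∂μ, X ω = 1 ∨ X ω = -1 := by
  have hmeas (a : ℤ) : MeasurableSet {ω | X ω = a} := hX (measurableSet_singleton a)
  rw [ae_iff_measure_eq (p := fun ω => X ω = 1 ∨ X ω = -1)
      ((hmeas 1).union (hmeas (-1))).nullMeasurableSet,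
    Set.ofPred_or, measure_union _ (hmeas (-1)), h₁, h₂, ENNReal.add_halves, measure_univ]
  exact Set.disjoint_left.2 fun ω h₁ h₂ => by simp_all

theorem ae_stepList_mem_signLists [IsProbabilityMeasure μ] (hmeas : ∀ i, Measurable (ζ i))
    (hdist : ∀ i, μ {ω | ζ i ω = 1} = 1 / 2 ∧ μ {ω | ζ i ω = -1} = 1 / 2) (n : ℕ) :
    ∀ᵐ ω ∂μ, stepList ζ n ω ∈ signLists n := by
  have := ae_all_iff.2 fun i => ae_eq_one_or_eq_neg_one (hmeas i) (hdist i).1 (hdist i).2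
  filter_upwards [this] with ω hω
  simp [mem_signLists, stepList, List.mem_ofFn, hω]

theorem measure_stepList_eq
    (hindep : ∀ (I : Finset ℕ) (v : ℕ → ℤ),
      μ {ω | ∀ i ∈ I, ζ i ω = v i} = ∏ i ∈ I, μ {ω | ζ i ω = v i})
    (hdist : ∀ i, μ {ω | ζ i ω = 1} = 1 / 2 ∧ μ {ω | ζ i ω = -1} = 1 / 2)
    {n : ℕ} {l : List ℤ} (hl : l ∈ signLists n) :
    μ (stepList ζ n ⁻¹' {l}) = 2⁻¹ ^ n := by
  obtain ⟨hlen, hpm⟩ := mem_signLists.1 hl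
  have : stepList ζ n ⁻¹' {l} = {ω | ∀ i ∈ range n, ζ i ω = l.getD i 0} := by
    ext ω; exact stepList_eq_iff hlen ω
  rw [this, hindep, show (2⁻¹ : ENNReal) ^ n = ∏ _i ∈ range n, 2⁻¹ by simp]
  refine prod_congr rfl fun i hi => ?_
  have hi : i < l.length := hlen ▸ mem_range.1 hi
  rw [List.getD_eq_getElem l 0 hi]
  rcases hpm _ (List.getElem_mem hi) with h | h <;> rw [h, ← one_div]
  exacts [(hdist i).1, (hdist i).2]

theorem measure_stepList_mem
    (hmeas : ∀ i, Measurable (ζ i))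
    (hindep : ∀ (I : Finset ℕ) (v : ℕ → ℤ),
      μ {ω | ∀ i ∈ I, ζ i ω = v i} = ∏ i ∈ I, μ {ω | ζ i ω = v i})
    (hdist : ∀ i, μ {ω | ζ i ω = 1} = 1 / 2 ∧ μ {ω | ζ i ω = -1} = 1 / 2)
    {n : ℕ} {T : Finset (List ℤ)} (hT : T ⊆ signLists n) :
    μ (stepList ζ n ⁻¹' T) = #T * 2⁻¹ ^ n := by
  have hfiber : ∀ l ∈ T, MeasurableSet (stepList ζ n ⁻¹' {l}) := by
    intro l hl
    have : stepList ζ n ⁻¹' {l} = ⋂ i ∈ range n, ζ i ⁻¹' {l.getD i 0} := by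
      ext ω; simpa using stepList_eq_iff (mem_signLists.1 (hT hl)).1 ω
    rw [this]
    exact Finset.measurableSet_biInter _ fun i _ => hmeas i (measurableSet_singleton _)
  rw [← sum_measure_preimage_singleton T hfiber,
    sum_congr rfl fun l hl => measure_stepList_eq hindep hdist (hT hl), sum_const, nsmul_eq_mul]

theorem measure_hittingTime_eq [IsProbabilityMeasure μ]
    (hmeas : ∀ i, Measurable (ζ i))
    (hindep : ∀ (I : Finset ℕ) (v : ℕ → ℤ),
      μ {ω | ∀ i ∈ I, ζ i ω = v i} = ∏ i ∈ I, μ {ω | ζ i ω = v i})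
    (hdist : ∀ i, μ {ω | ζ i ω = 1} = 1 / 2 ∧ μ {ω | ζ i ω = -1} = 1 / 2)
    {k : ℤ} (hk : k ≠ 0) {n : ℕ} (hn : n ≠ 0) :
    μ {ω | sInf {j | 1 ≤ j ∧ ∑ i ∈ range j, ζ i ω = k} = n} =
      firstPassageCount n k * 2⁻¹ ^ n := by
  rw [firstPassageCount, ← measure_stepList_mem hmeas hindep hdist (filter_subset _ _)]
  refine measure_congr (Filter.eventuallyEq_set.2 ?_)
  filter_upwards [ae_stepList_mem_signLists hmeas hdist n] with ω hω
  simp [hittingTime_eq_iff hk hn, hω]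

end Walk

end SimpleRandomWalk

open SimpleRandomWalk

/-- Hitting time distribution for simple random walk: if `H` is the first
hitting time of `k ≠ 0`, then for `m ≥ 1` of the same parity as `k`,
`P(H = m) = (|k|/m) · C(m, (m+|k|)/2) · 2^{−m}`, and `P(H = m) = 0` if the
parities differ. -/
theorem stmt_4
    {Ω : Type*} [MeasureSpace Ω] [IsProbabilityMeasure (ℙ : Measure Ω)]
    (ζ : ℕ → Ω → ℤ)
    (hmeas : ∀ i, Measurable (ζ i))
    (hindep : ∀ (I : Finset ℕ) (v : ℕ → ℤ),
      ℙ {ω | ∀ i ∈ I, ζ i ω = v i} = ∏ i ∈ I, ℙ {ω | ζ i ω = v i})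
    (hdist : ∀ i, ℙ {ω | ζ i ω = 1} = 1/2 ∧ ℙ {ω | ζ i ω = -1} = 1/2)
    (k : ℤ) (hk : k ≠ 0)
    (H : Ω → ℕ)
    (hH : ∀ ω, H ω = sInf {m : ℕ | 1 ≤ m ∧ ∑ i ∈ Finset.range m, ζ i ω = k})
    (m : ℕ) (hm : 1 ≤ m) :
    (m % 2 = k.natAbs % 2 →
      ℙ {ω | H ω = m}
        = ENNReal.ofReal
            (((k.natAbs : ℝ) / m) * (m.choose ((m + k.natAbs)/2)) * (2:ℝ)⁻¹ ^ m))
    ∧ (m % 2 ≠ k.natAbs % 2 → ℙ {ω | H ω = m} = 0) := by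
  have hprob : ℙ {ω | H ω = m} = firstPassageCount m k.natAbs * 2⁻¹ ^ m := by
    simp_rw [hH, Int.natCast_natAbs, firstPassageCount_abs]
    exact measure_hittingTime_eq hmeas hindep hdist hk (Nat.one_le_iff_ne_zero.1 hm)
  refine ⟨fun hpar => ?_, fun hpar => ?_⟩
  · have hcount : (firstPassageCount m k.natAbs : ℝ) =
        k.natAbs / m * m.choose ((m + k.natAbs) / 2) := by
      rw [div_mul_eq_mul_div, eq_div_iff (by positivity), mul_comm]
      exact_mod_cast mul_firstPassageCount m k.natAbs hpar
    rw [hprob, ← hcount, ENNReal.ofReal_mul (by positivity), ENNReal.ofReal_natCast,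
      ENNReal.ofReal_pow (by norm_num), ENNReal.ofReal_inv_of_pos two_pos, ENNReal.ofReal_ofNat]
  · rw [hprob, firstPassageCount_eq_zero_of_mod_two_ne hpar, Nat.cast_zero, zero_mul]
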